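/- The corrected Sadowsky energy density f : ℝ² → ℝ, defined by f(a,b) = (a²+b²)²/a² if |a| > |b| and f(a,b) = 4b² if |a| ≤ |b|, is convex on ℝ². -/
import Mathlib


open Classical in
noncomputable def sadowsky (x : ℝ × ℝ) : ℝ :=
  if |x.1| > |x.2| then (x.1 ^ 2 + x.2 ^ 2) ^ 2 / x.1 ^ 2 else 4 * x.2 ^ 2

lemma sadowsky_lb (t : ℝ) (ht : t ^ 2 ≤ 1) (x : ℝ × ℝ) :
    ((1 - t ^ 2) * x.1 + 2 * t * x.2) ^ 2 ≤ sadowsky x := by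
  obtain ⟨a, b⟩ := x
  simp only [sadowsky]
  split_ifs with h
  · have ha' : a ≠ 0 := by
      intro h0
      rw [h0] at h
      simp only [abs_zero] at h
      linarith [abs_nonneg b]
    have ha : (0:ℝ) < a ^ 2 := by positivity
    rw [le_div_iff₀ ha]
    nlinarith [sq_nonneg (t * a - b), sq_nonneg (t * a + b), sq_nonneg a,
      mul_nonneg (mul_nonneg (sub_nonneg.2 ht) (sq_nonneg a)) (sq_nonneg (t * a - b)),
      mul_nonneg (sq_nonneg (t * a + b)) (sq_nonneg (t * a - b))]
  · have hab : a ^ 2 ≤ b ^ 2 := by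
      have h' := not_lt.mp h
      nlinarith [sq_abs a, sq_abs b, abs_nonneg a, abs_nonneg b]
    have hinner : a ^ 2 ≤ (2 * b - t * a) ^ 2 := by
      nlinarith [sq_nonneg (t * a - b), sq_nonneg (t * a + b),
        mul_nonneg (sub_nonneg.2 ht) (sq_nonneg a)]
    nlinarith [mul_nonneg (sub_nonneg.2 ht) (sub_nonneg.2 hinner)]

lemma sadowsky_eq (x : ℝ × ℝ) :
    ∃ t : ℝ, t ^ 2 ≤ 1 ∧ sadowsky x = ((1 - t ^ 2) * x.1 + 2 * t * x.2) ^ 2 := by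
  obtain ⟨a, b⟩ := x
  by_cases h : |a| > |b|
  · have ha : a ≠ 0 := by
      intro h0
      rw [h0] at h
      simp only [abs_zero] at h
      linarith [abs_nonneg b]
    refine ⟨b / a, ?_, ?_⟩
    · rw [div_pow, div_le_one (by positivity)]
      nlinarith [sq_abs a, sq_abs b, abs_nonneg a, abs_nonneg b]
    · simp only [sadowsky, if_pos h]
      field_simp
      ring
  · refine ⟨if 0 ≤ b then 1 else -1, ?_, ?_⟩ <;> split_ifs <;>
      simp [sadowsky, h] <;> ring

theorem sadowsky_convex : ConvexOn ℝ Set.univ sadowsky := by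
  refine ⟨convex_univ, fun x _ y _ a b ha hb hab => ?_⟩
  obtain ⟨t, ht, heq⟩ := sadowsky_eq (a • x + b • y)
  rw [heq]
  have hx := sadowsky_lb t ht x
  have hy := sadowsky_lb t ht y
  have hz : (1 - t ^ 2) * (a • x + b • y).1 + 2 * t * (a • x + b • y).2
      = a * ((1 - t ^ 2) * x.1 + 2 * t * x.2) + b * ((1 - t ^ 2) * y.1 + 2 * t * y.2) := by
    simp only [Prod.fst_add, Prod.snd_add, Prod.smul_fst, Prod.smul_snd, smul_eq_mul]
    ring
  rw [hz]
  simp only [smul_eq_mul]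
  nlinarith [mul_nonneg ha hb,
    sq_nonneg (((1 - t ^ 2) * x.1 + 2 * t * x.2) - ((1 - t ^ 2) * y.1 + 2 * t * y.2)),
    mul_le_mul_of_nonneg_left hx ha, mul_le_mul_of_nonneg_left hy hb]
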